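/- There exists a convex function f ∈ 𝒞 and an integer n ≥ 10 such that the inverse coefficient A_n of f satisfies |A_n| > 1. (In fact for every n ≥ 10 such a function exists.) -/

import Mathlib

open Complex Metric

/-- The quantity `1 + z f''(z)/f'(z)`. -/
noncomputable def convexQuot (f : ℂ → ℂ) (z : ℂ) : ℂ :=
  1 + z * deriv (deriv f) z / deriv f z

/-- `f` is analytic on the unit disk with `f(0) = 0` and `f'(0) = 1`. -/
def IsNormalizedAnalytic (f : ℂ → ℂ) : Prop :=
  DifferentiableOn ℂ f (ball 0 1) ∧ f 0 = 0 ∧ deriv f 0 = 1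

/-- `a` is the sequence of Taylor coefficients of `f` at `0` (normalized). -/
def HasCoeffs (f : ℂ → ℂ) (a : ℕ → ℂ) : Prop :=
  (∀ z ∈ ball (0 : ℂ) 1, HasSum (fun n : ℕ => a n * z ^ n) (f z)) ∧ a 0 = 0 ∧ a 1 = 1

/-- `f` is convex of order `α`: `Re(1 + z f''/f') > α` on the unit disk. -/
def IsConvexOfOrder (α : ℝ) (f : ℂ → ℂ) : Prop :=
  IsNormalizedAnalytic f ∧ ∀ z ∈ ball (0 : ℂ) 1, α < (convexQuot f z).re

/-- `f` is convex: `Re(1 + z f''/f') > 0` on the unit disk. -/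
def IsConvex (f : ℂ → ℂ) : Prop := IsConvexOfOrder 0 f

/-- `f` is strongly convex of order `β`: `|arg(1 + z f''/f')| ≤ βπ/2` on the unit disk. -/
def IsStronglyConvex (β : ℝ) (f : ℂ → ℂ) : Prop :=
  IsNormalizedAnalytic f ∧
    ∀ z ∈ ball (0 : ℂ) 1, |Complex.arg (convexQuot f z)| ≤ β * Real.pi / 2

/-- `g` is an inverse of `f` near `0`, with Taylor coefficients `A` on `|w| < r`. -/
def IsInverseWithCoeffs (f g : ℂ → ℂ) (A : ℕ → ℂ) (r : ℝ) : Prop :=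
  0 < r ∧ (∀ w ∈ ball (0 : ℂ) r, g w ∈ ball (0 : ℂ) 1 ∧ f (g w) = w) ∧
    (∀ w ∈ ball (0 : ℂ) r, HasSum (fun n : ℕ => A n * w ^ n) (g w)) ∧ A 0 = 0 ∧ A 1 = 1

/-- `1 + z f''/f'` is subordinate to `p` on the unit disk. -/
def ConvexQuotSubord (f : ℂ → ℂ) (p : ℂ → ℂ) : Prop :=
  ∃ ω : ℂ → ℂ, DifferentiableOn ℂ ω (ball 0 1) ∧ ω 0 = 0 ∧
    (∀ z ∈ ball (0 : ℂ) 1, ω z ∈ ball (0 : ℂ) 1) ∧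
    ∀ z ∈ ball (0 : ℂ) 1, convexQuot f z = p (ω z)

/-- The class `𝒞_E` of convex functions associated with the exponential. -/
def MemCE (f : ℂ → ℂ) : Prop := IsNormalizedAnalytic f ∧ ConvexQuotSubord f Complex.exp

/-- The class `𝒞_{SG}` of convex functions associated with the modified sigmoid. -/
def MemCSG (f : ℂ → ℂ) : Prop :=
  IsNormalizedAnalytic f ∧ ConvexQuotSubord f (fun w => 2 / (1 + Complex.exp (-w)))

/-!
The witness is `f(z) = (1 - ((1 - z)/(1 + z))^α) / (2α)` with `α = 9/10`. For it,
`1 + z f''/f'` is the convex combination `(1+α)/2 · (1-z)/(1+z) + (1-α)/2 · (1+z)/(1-z)` of two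
maps of the disk into the right half-plane, so `f` is convex. Its inverse
`g(w) = (1 - V)/(1 + V)`, `V = (1 - 2αw)^(1/α)`, solves `(1 - 2αw) g' = 1 - g²`, so the inverse
coefficients obey the quadratic recurrence `(n+1) A_{n+1} = 2α n A_n - ∑ A_k A_{n-k}`. For
`2α = 9/5` the coefficients `A_1, …, A_6` are positive and `A_7, …, A_13` negative and
decreasing, and induction keeps `A` decreasing: if it decreases on `[7, m]`, only the convolution
terms with `k ≤ 6` or `m - k ≤ 6` can be negative, and they total at least `2 S A_m` with
`S = A_1 + ⋯ + A_6 < 3.66`, so `(m+1) A_{m+1} ≤ (9m/5 - 2S) A_m ≤ (m+1) A_m` once `m ≥ 13`.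
Hence `A_n ≤ A_10 < -1` for all `n ≥ 10`.
-/

open Finset Topology

/-- The Taylor coefficients at `0` of the solution of `(1 - c w) g' = 1 - g²`, `g(0) = 0`. -/
noncomputable def invCoeff (c : ℝ) : ℕ → ℝ
  | 0 => 0
  | 1 => 1
  | n + 2 =>
      (c * (n + 1) * invCoeff c (n + 1) -
        ∑ k : Fin (n + 2), invCoeff c k * invCoeff c (n + 1 - k)) / (n + 2)

namespace invCoeff

variable (c : ℝ)

@[simp] theorem zero : invCoeff c 0 = 0 := by simp [invCoeff]

@[simp] theorem one : invCoeff c 1 = 1 := by simp [invCoeff]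

theorem succ_mul {n : ℕ} (hn : 1 ≤ n) :
    (n + 1) * invCoeff c (n + 1) =
      c * n * invCoeff c n - ∑ k ∈ range (n + 1), invCoeff c k * invCoeff c (n - k) := by
  obtain ⟨m, rfl⟩ := Nat.exists_eq_add_of_le' hn
  rw [invCoeff, Fin.sum_univ_eq_sum_range (fun k => invCoeff c k * invCoeff c (m + 1 - k))]
  push_cast
  field_simp
  ring

theorem eq_div {n : ℕ} (hn : 1 ≤ n) :
    invCoeff c (n + 1) =
      (c * n * invCoeff c n - ∑ k ∈ range (n + 1), invCoeff c k * invCoeff c (n - k)) /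
        (n + 1) := by
  rw [← succ_mul c hn]
  field_simp

end invCoeff

theorem eq_invCoeff_of_rec {c : ℝ} {a : ℕ → ℂ} (h0 : a 0 = 0) (h1 : a 1 = 1)
    (hrec : ∀ n ≥ 1, (n + 1) * a (n + 1) = c * n * a n - ∑ k ∈ range (n + 1), a k * a (n - k)) :
    ∀ n, a n = invCoeff c n := by
  intro n
  induction n using Nat.strong_induction_on with
  | _ n ih =>
  match n with
  | 0 => simp [h0]
  | 1 => simp [h1]
  | m + 2 =>
    have hcast := congrArg ((↑) : ℝ → ℂ) (invCoeff.succ_mul c (n := m + 1) (by omega))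
    push_cast at hcast
    have hsum : ∑ k ∈ range (m + 2), a k * a (m + 1 - k) =
        ∑ k ∈ range (m + 2), (invCoeff c k : ℂ) * invCoeff c (m + 1 - k) :=
      sum_congr rfl fun k hk => by
        rw [ih k (by simp at hk; omega), ih (m + 1 - k) (by omega)]
    have h := hrec (m + 1) (by omega)
    rw [hsum, ih (m + 1) (by omega)] at h
    have hm : ((m : ℂ) + 2) ≠ 0 := by exact_mod_cast Nat.succ_ne_zero (m + 1)
    refine sub_eq_zero.mp ((mul_eq_zero.mp ?_).resolve_left hm)
    push_cast at h
    linear_combination h - hcast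

theorem iteratedDeriv_fun_id_mul_zero {n : ℕ} {h : ℂ → ℂ} (hh : ContDiffAt ℂ n h 0) :
    iteratedDeriv n (fun w => w * h w) 0 = n * iteratedDeriv (n - 1) h 0 := by
  rw [iteratedDeriv_fun_mul (f := fun w => w) contDiffAt_id hh, sum_eq_single 1]
  · simp [iteratedDeriv_fun_id_zero]
  · intro k _ hk
    simp [iteratedDeriv_fun_id_zero, hk]
  · intro h1
    obtain rfl : n = 0 := by simpa using h1
    simp

theorem iteratedDeriv_succ_of_ode {c : ℝ} {g : ℂ → ℂ} (hg : AnalyticAt ℂ g 0)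
    (hode : ∀ᶠ w in 𝓝 0, (1 - c * w) * deriv g w = 1 - g w ^ 2) {n : ℕ} (hn : 1 ≤ n) :
    iteratedDeriv (n + 1) g 0 = c * n * iteratedDeriv n g 0 -
      ∑ k ∈ range (n + 1), (n.choose k : ℂ) * iteratedDeriv k g 0 * iteratedDeriv (n - k) g 0 := by
  have hg' : AnalyticAt ℂ (deriv g) 0 := hg.deriv
  have hev : deriv g =ᶠ[𝓝 0] fun w => 1 + (c * (w * deriv g w) - g w * g w) := by
    filter_upwards [hode] with w hw
    linear_combination hw
  have hlin : ContDiffAt ℂ n (fun w => (c : ℂ) * (w * deriv g w)) 0 :=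
    (analyticAt_const.mul (analyticAt_id.mul hg')).contDiffAt
  rw [iteratedDeriv_succ', hev.iteratedDeriv_eq, iteratedDeriv_const_add (by omega),
    iteratedDeriv_fun_sub hlin (hg.fun_mul hg).contDiffAt, iteratedDeriv_const_mul_field,
    iteratedDeriv_fun_id_mul_zero hg'.contDiffAt, iteratedDeriv_fun_mul hg.contDiffAt hg.contDiffAt,
    ← iteratedDeriv_succ', Nat.sub_add_cancel hn]
  ring

theorem hasSum_invCoeff_of_ode {c r : ℝ} {g : ℂ → ℂ} (hg : DifferentiableOn ℂ g (ball 0 r))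
    (hg0 : g 0 = 0) (hode : ∀ w ∈ ball (0 : ℂ) r, (1 - c * w) * deriv g w = 1 - g w ^ 2)
    {w : ℂ} (hw : w ∈ ball 0 r) : HasSum (fun n => (invCoeff c n : ℂ) * w ^ n) (g w) := by
  have h0 : (0 : ℂ) ∈ ball 0 r := mem_ball_self (pos_of_mem_ball hw)
  have hgA : AnalyticAt ℂ g 0 := hg.analyticOnNhd isOpen_ball 0 h0
  have hode' : ∀ᶠ w in 𝓝 0, (1 - c * w) * deriv g w = 1 - g w ^ 2 :=
    Filter.eventually_of_mem (isOpen_ball.mem_nhds h0) hode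
  have ha : ∀ n, iteratedDeriv n g 0 / n.factorial = invCoeff c n := by
    refine eq_invCoeff_of_rec (by simp [hg0]) (by simpa [hg0] using hode 0 h0) fun n hn => ?_
    have hsum : ∑ k ∈ range (n + 1), iteratedDeriv k g 0 / k.factorial *
          (iteratedDeriv (n - k) g 0 / (n - k).factorial) =
        (∑ k ∈ range (n + 1), (n.choose k : ℂ) * iteratedDeriv k g 0 *
          iteratedDeriv (n - k) g 0) / n.factorial := by
      rw [sum_div]
      refine sum_congr rfl fun k hk => ?_
      have hkn : k ≤ n := Nat.lt_succ_iff.mp (mem_range.mp hk)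
      have hf : (n.choose k : ℂ) * k.factorial * (n - k).factorial = n.factorial := by
        exact_mod_cast Nat.choose_mul_factorial_mul_factorial hkn
      have hc : (n.choose k : ℂ) ≠ 0 := Nat.cast_ne_zero.mpr (Nat.choose_pos hkn).ne'
      rw [← hf]
      field_simp
    rw [hsum, Nat.factorial_succ, iteratedDeriv_succ_of_ode hgA hode' hn]
    push_cast
    field_simp
  have hterm : (fun n => (invCoeff c n : ℂ) * w ^ n) =
      fun n => (n.factorial : ℂ)⁻¹ • (w - 0) ^ n • iteratedDeriv n g 0 := by
    funext n
    rw [← ha n, sub_zero, smul_eq_mul, smul_eq_mul]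
    field_simp
  rw [hterm]
  exact Complex.hasSum_taylorSeries_on_ball hg hw

noncomputable def cayley (z : ℂ) : ℂ := (1 - z) / (1 + z)

theorem one_add_ne_zero_of_norm_lt_one {z : ℂ} (hz : ‖z‖ < 1) : 1 + z ≠ 0 := by
  intro h
  rw [eq_neg_of_add_eq_zero_right h, norm_neg, norm_one] at hz
  exact lt_irrefl _ hz

theorem one_sub_ne_zero_of_norm_lt_one {z : ℂ} (hz : ‖z‖ < 1) : 1 - z ≠ 0 := by
  simpa [sub_eq_add_neg] using one_add_ne_zero_of_norm_lt_one (z := -z) (by simpa using hz)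

theorem one_sub_sq_ne_zero_of_norm_lt_one {z : ℂ} (hz : ‖z‖ < 1) : 1 - z ^ 2 ≠ 0 := by
  rw [show 1 - z ^ 2 = (1 - z) * (1 + z) by ring]
  exact mul_ne_zero (one_sub_ne_zero_of_norm_lt_one hz) (one_add_ne_zero_of_norm_lt_one hz)

theorem one_add_ne_zero_of_re_pos {z : ℂ} (hz : 0 < z.re) : 1 + z ≠ 0 := fun h => by
  have := congrArg re h
  rw [add_re, one_re, zero_re] at this
  linarith

theorem cayley_cayley {z : ℂ} (hz : 1 + z ≠ 0) : cayley (cayley z) = z := by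
  have h : 1 + cayley z = 2 / (1 + z) := by
    rw [cayley]
    field_simp
    ring
  rw [cayley, h, cayley]
  field_simp
  ring

theorem cayley_ne_zero {z : ℂ} (hz : ‖z‖ < 1) : cayley z ≠ 0 :=
  div_ne_zero (one_sub_ne_zero_of_norm_lt_one hz) (one_add_ne_zero_of_norm_lt_one hz)

theorem re_cayley_pos {z : ℂ} (hz : ‖z‖ < 1) : 0 < (cayley z).re := by
  have h1 : normSq z < 1 := by
    rw [normSq_eq_norm_sq]
    nlinarith [norm_nonneg z]
  have h2 : 0 < normSq (1 + z) := normSq_pos.mpr (one_add_ne_zero_of_norm_lt_one hz)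
  rw [cayley, div_re, ← add_div]
  apply div_pos _ h2
  rw [normSq_apply] at h1
  simp only [add_re, add_im, sub_re, sub_im, one_re, one_im]
  nlinarith

theorem norm_cayley_lt_one {z : ℂ} (hz : 0 < z.re) : ‖cayley z‖ < 1 := by
  rw [cayley, norm_div, div_lt_one (norm_pos_iff.mpr (one_add_ne_zero_of_re_pos hz)),
    ← sq_lt_sq₀ (norm_nonneg _) (norm_nonneg _), ← normSq_eq_norm_sq, ← normSq_eq_norm_sq,
    normSq_apply, normSq_apply]
  simp only [add_re, add_im, sub_re, sub_im, one_re, one_im]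
  nlinarith

theorem cayley_mem_slitPlane {z : ℂ} (hz : ‖z‖ < 1) : cayley z ∈ slitPlane :=
  mem_slitPlane_iff.mpr (Or.inl (re_cayley_pos hz))

theorem hasDerivAt_cayley {z : ℂ} (hz : 1 + z ≠ 0) : HasDerivAt cayley (-2 / (1 + z) ^ 2) z :=
  (((hasDerivAt_id z).const_sub 1).div ((hasDerivAt_id z).const_add 1) hz).congr_deriv
    (by simp only [id]; field_simp; ring)

theorem hasDerivAt_cayley_cpow {z : ℂ} (hz : ‖z‖ < 1) (α : ℂ) :
    HasDerivAt (fun z => cayley z ^ α) (-2 * α * cayley z ^ α / (1 - z ^ 2)) z := by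
  have hadd := one_add_ne_zero_of_norm_lt_one hz
  have hsub := one_sub_ne_zero_of_norm_lt_one hz
  have hsq := one_sub_sq_ne_zero_of_norm_lt_one hz
  refine ((hasDerivAt_cayley hadd).cpow_const (cayley_mem_slitPlane hz)).congr_deriv ?_
  rw [cpow_sub _ _ (cayley_ne_zero hz), cpow_one]
  generalize cayley z ^ α = P
  rw [cayley]
  field_simp
  ring

noncomputable def sectorMap (α : ℝ) (z : ℂ) : ℂ := (1 - cayley z ^ (α : ℂ)) / (2 * α)

noncomputable def sectorMapInv (α : ℝ) (w : ℂ) : ℂ := cayley ((1 - 2 * α * w) ^ (α : ℂ)⁻¹)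

section sectorMap

variable {α : ℝ}

theorem hasDerivAt_sectorMap (hα : α ≠ 0) {z : ℂ} (hz : ‖z‖ < 1) :
    HasDerivAt (sectorMap α) (cayley z ^ (α : ℂ) / (1 - z ^ 2)) z := by
  have hα' : (α : ℂ) ≠ 0 := ofReal_ne_zero.mpr hα
  exact (((hasDerivAt_cayley_cpow hz α).const_sub 1).div_const (2 * (α : ℂ))).congr_deriv
    (by field_simp)

theorem deriv_deriv_sectorMap (hα : α ≠ 0) {z : ℂ} (hz : ‖z‖ < 1) :
    deriv (deriv (sectorMap α)) z =
      cayley z ^ (α : ℂ) * (2 * z - 2 * α) / (1 - z ^ 2) ^ 2 := by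
  have hsq := one_sub_sq_ne_zero_of_norm_lt_one hz
  have hev : deriv (sectorMap α) =ᶠ[𝓝 z] fun z => cayley z ^ (α : ℂ) / (1 - z ^ 2) := by
    filter_upwards [isOpen_ball.mem_nhds (mem_ball_zero_iff.mpr hz)] with y hy
    exact (hasDerivAt_sectorMap hα (mem_ball_zero_iff.mp hy)).deriv
  have hden : HasDerivAt (fun z : ℂ => 1 - z ^ 2) (-(2 * z)) z := by
    simpa using (hasDerivAt_pow 2 z).const_sub 1
  rw [hev.deriv_eq, ((hasDerivAt_cayley_cpow hz α).fun_div hden hsq).deriv]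
  field_simp
  ring

theorem convexQuot_sectorMap (hα : α ≠ 0) {z : ℂ} (hz : ‖z‖ < 1) :
    convexQuot (sectorMap α) z =
      ((1 + α) / 2 : ℝ) * cayley z + ((1 - α) / 2 : ℝ) * cayley (-z) := by
  have hadd := one_add_ne_zero_of_norm_lt_one hz
  have hsub := one_sub_ne_zero_of_norm_lt_one hz
  have hsq := one_sub_sq_ne_zero_of_norm_lt_one hz
  have hP : cayley z ^ (α : ℂ) ≠ 0 := by
    rw [Ne, cpow_eq_zero_iff, not_and_or]
    exact Or.inl (cayley_ne_zero hz)
  rw [convexQuot, deriv_deriv_sectorMap hα hz, (hasDerivAt_sectorMap hα hz).deriv]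
  generalize cayley z ^ (α : ℂ) = P at hP ⊢
  push_cast
  simp only [cayley, sub_neg_eq_add, ← sub_eq_add_neg]
  field_simp
  ring

theorem isConvex_sectorMap (hα : α ≠ 0) (hα₁ : |α| ≤ 1) : IsConvex (sectorMap α) := by
  refine ⟨⟨fun z hz => ?_, ?_, ?_⟩, fun z hz => ?_⟩
  · exact (hasDerivAt_sectorMap hα (mem_ball_zero_iff.mp hz)).differentiableAt
      |>.differentiableWithinAt
  · simp [sectorMap, cayley]
  · simp [(hasDerivAt_sectorMap hα (by simp : ‖(0 : ℂ)‖ < 1)).deriv, cayley]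
  · have hz := mem_ball_zero_iff.mp hz
    have h₁ := re_cayley_pos hz
    have h₂ := re_cayley_pos (z := -z) (by simpa using hz)
    obtain ⟨hl, hr⟩ := abs_le.mp hα₁
    rw [convexQuot_sectorMap hα hz, add_re, re_ofReal_mul, re_ofReal_mul]
    have hmin : 0 < min (cayley z).re (cayley (-z)).re := lt_min h₁ h₂
    nlinarith [mul_le_mul_of_nonneg_left (min_le_left (cayley z).re (cayley (-z)).re)
      (show 0 ≤ (1 + α) / 2 by linarith), mul_le_mul_of_nonneg_left
      (min_le_right (cayley z).re (cayley (-z)).re) (show 0 ≤ (1 - α) / 2 by linarith)]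

variable {w : ℂ}

theorem norm_two_mul_mul_lt (hα₁ : |α| ≤ 1) (hw : ‖w‖ < 1 / 4) : ‖2 * α * w‖ < 1 / 2 := by
  rw [norm_mul, norm_mul, norm_real, Real.norm_eq_abs]
  have := norm_nonneg w
  norm_num
  nlinarith [abs_nonneg α]

theorem one_sub_two_mul_mul_mem_slitPlane (hα₁ : |α| ≤ 1) (hw : ‖w‖ < 1 / 4) :
    1 - 2 * α * w ∈ slitPlane := by
  refine mem_slitPlane_iff.mpr (Or.inl ?_)
  have := (abs_re_le_norm (2 * α * w)).trans (norm_two_mul_mul_lt hα₁ hw).le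
  rw [sub_re, one_re]
  linarith [le_abs_self (2 * α * w).re]

/-- Since `3/4 < π/2`, this keeps `(1 - 2αw)^(1/α)` in the right half-plane and makes
`((1 - 2αw)^(1/α))^α = 1 - 2αw` hold on the principal branch. -/
theorem norm_log_mul_inv_lt (hα : α ≠ 0) (hα₁ : |α| ≤ 1) (hw : ‖w‖ < 1 / 4) :
    ‖log (1 - 2 * α * w) * (α : ℂ)⁻¹‖ < 3 / 4 := by
  have hlog := norm_log_one_add_half_le_self (z := -(2 * α * w))
    (by rw [norm_neg]; exact (norm_two_mul_mul_lt hα₁ hw).le)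
  rw [← sub_eq_add_neg, norm_neg, norm_mul, norm_mul, norm_real, Real.norm_eq_abs] at hlog
  have hα' : 0 < |α| := abs_pos.mpr hα
  rw [norm_mul, norm_inv, norm_real, Real.norm_eq_abs, ← div_eq_mul_inv, div_lt_iff₀ hα']
  norm_num at hlog
  nlinarith

theorem re_cpow_inv_pos (hα : α ≠ 0) (hα₁ : |α| ≤ 1) (hw : ‖w‖ < 1 / 4) :
    0 < ((1 - 2 * α * w) ^ (α : ℂ)⁻¹).re := by
  rw [cpow_def_of_ne_zero (slitPlane_ne_zero (one_sub_two_mul_mul_mem_slitPlane hα₁ hw)), exp_re]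
  refine mul_pos (Real.exp_pos _) (Real.cos_pos_of_mem_Ioo ⟨?_, ?_⟩) <;>
  · have him := abs_lt.mp ((abs_im_le_norm _).trans_lt (norm_log_mul_inv_lt hα hα₁ hw))
    linarith [Real.pi_gt_three]

theorem hasDerivAt_sectorMapInv (hα : α ≠ 0) (hα₁ : |α| ≤ 1) (hw : ‖w‖ < 1 / 4) :
    HasDerivAt (sectorMapInv α) ((1 - sectorMapInv α w ^ 2) / (1 - 2 * α * w)) w := by
  have hα' : (α : ℂ) ≠ 0 := ofReal_ne_zero.mpr hα
  have hζ := one_sub_two_mul_mul_mem_slitPlane hα₁ hw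
  have hζ0 := slitPlane_ne_zero hζ
  have hV := one_add_ne_zero_of_re_pos (re_cpow_inv_pos hα hα₁ hw)
  have hlin : HasDerivAt (fun w : ℂ => 1 - 2 * α * w) (-(2 * α)) w := by
    simpa using ((hasDerivAt_id w).const_mul (2 * (α : ℂ))).const_sub 1
  refine ((hasDerivAt_cayley hV).comp w (hlin.cpow_const hζ)).congr_deriv ?_
  rw [cpow_sub _ _ hζ0, cpow_one, sectorMapInv, cayley]
  generalize (1 - 2 * α * w) ^ (α : ℂ)⁻¹ = V at hV ⊢
  field_simp
  ring

theorem sectorMap_sectorMapInv (hα : α ≠ 0) (hα₁ : |α| ≤ 1) (hw : ‖w‖ < 1 / 4) :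
    sectorMap α (sectorMapInv α w) = w := by
  have hα' : (α : ℂ) ≠ 0 := ofReal_ne_zero.mpr hα
  have him := abs_lt.mp ((abs_im_le_norm _).trans_lt (norm_log_mul_inv_lt hα hα₁ hw))
  have hpi := Real.pi_gt_three
  rw [sectorMap, sectorMapInv,
    cayley_cayley (one_add_ne_zero_of_re_pos (re_cpow_inv_pos hα hα₁ hw)),
    ← cpow_mul _ (by linarith) (by linarith), inv_mul_cancel₀ hα', cpow_one]
  field_simp
  ring

theorem sectorMapInv_zero (α : ℝ) : sectorMapInv α 0 = 0 := by
  simp [sectorMapInv, cayley]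

theorem isInverseWithCoeffs_sectorMapInv (hα : α ≠ 0) (hα₁ : |α| ≤ 1) :
    IsInverseWithCoeffs (sectorMap α) (sectorMapInv α) (fun n => invCoeff (2 * α) n) (1 / 4) := by
  have hdiff : DifferentiableOn ℂ (sectorMapInv α) (ball 0 (1 / 4)) := fun w hw =>
    (hasDerivAt_sectorMapInv hα hα₁ (mem_ball_zero_iff.mp hw)).differentiableAt
      |>.differentiableWithinAt
  refine ⟨by norm_num, fun w hw => ⟨?_, ?_⟩, fun w hw => hasSum_invCoeff_of_ode hdiff
    (sectorMapInv_zero α) (fun w hw => ?_) hw, by simp, by simp⟩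
  · exact mem_ball_zero_iff.mpr
      (norm_cayley_lt_one (re_cpow_inv_pos hα hα₁ (mem_ball_zero_iff.mp hw)))
  · exact sectorMap_sectorMapInv hα hα₁ (mem_ball_zero_iff.mp hw)
  · have hw := mem_ball_zero_iff.mp hw
    have hζ0 := slitPlane_ne_zero (one_sub_two_mul_mul_mem_slitPlane hα₁ hw)
    rw [(hasDerivAt_sectorMapInv hα hα₁ hw).deriv]
    push_cast
    field_simp

end sectorMap

theorem two_mul_sum_mul_le_sum_mul_sub {p : ℕ → ℝ} {K m : ℕ} (hKm : 2 * K < m)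
    (hpos : ∀ k ≤ K, 0 ≤ p k) (hnonpos : ∀ i, K < i → i ≤ m → p i ≤ 0)
    (hmin : ∀ i, K < i → i ≤ m → p m ≤ p i) :
    2 * (∑ k ∈ range (K + 1), p k) * p m ≤ ∑ k ∈ range (m + 1), p k * p (m - k) := by
  set d : ℕ → ℝ := fun k => if k ≤ K then p k else 0
  have hd : ∑ k ∈ range (m + 1), d k = ∑ k ∈ range (K + 1), p k := by
    rw [← sum_subset (range_subset_range.mpr (by omega : K + 1 ≤ m + 1))]
    · exact sum_congr rfl fun k hk => if_pos (by simpa [Nat.lt_succ_iff] using hk)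
    · intro k _ hk
      exact if_neg (by simpa [Nat.lt_succ_iff] using hk)
  have hd' : ∑ k ∈ range (m + 1), d (m - k) = ∑ k ∈ range (m + 1), d k := by
    simpa using sum_range_reflect d (m + 1)
  calc 2 * (∑ k ∈ range (K + 1), p k) * p m
      = ∑ k ∈ range (m + 1), (d k + d (m - k)) * p m := by
        rw [← sum_mul, sum_add_distrib, hd', hd]
        ring
    _ ≤ ∑ k ∈ range (m + 1), p k * p (m - k) := by
        refine sum_le_sum fun k hk => ?_
        have hkm : k ≤ m := Nat.lt_succ_iff.mp (mem_range.mp hk)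
        simp only [d]
        by_cases hk : k ≤ K
        · rw [if_pos hk, if_neg (by omega), add_zero]
          exact mul_le_mul_of_nonneg_left (hmin _ (by omega) (by omega)) (hpos k hk)
        by_cases hk' : m - k ≤ K
        · rw [if_neg hk, if_pos hk', zero_add, mul_comm (p k)]
          exact mul_le_mul_of_nonneg_left (hmin _ (by omega) hkm) (hpos _ hk')
        · rw [if_neg hk, if_neg hk', add_zero, zero_mul]
          exact mul_nonneg_of_nonpos_of_nonpos (hnonpos k (by omega) hkm)
            (hnonpos _ (by omega) (by omega))

theorem invCoeff_succ_le {c : ℝ} {K M : ℕ} (hKM : 2 * K < M)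
    (hpos : ∀ k ≤ K, 0 ≤ invCoeff c k) (hneg : invCoeff c (K + 1) ≤ 0)
    (hbase : ∀ m, K < m → m < M → invCoeff c (m + 1) ≤ invCoeff c m)
    (hc : 2 * ∑ k ∈ range (K + 1), invCoeff c k + 1 ≤ (c - 1) * M) :
    ∀ m, K < m → invCoeff c (m + 1) ≤ invCoeff c m := by
  intro m
  induction m using Nat.strong_induction_on with
  | _ m ih =>
  intro hKm
  rcases lt_or_ge m M with hmM | hMm
  · exact hbase m hKm hmM
  set p := invCoeff c
  have hanti : ∀ i j, K < i → i ≤ j → j ≤ m → p j ≤ p i := by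
    intro i j hi hij hjm
    induction j, hij using Nat.le_induction with
    | base => exact le_rfl
    | succ j hij ihj => exact (ih j (by omega) (by omega)).trans (ihj (by omega))
  have hsum := two_mul_sum_mul_le_sum_mul_sub (by omega) hpos
    (fun i hi him => (hanti _ i (by omega) hi him).trans hneg)
    (fun i hi him => hanti i m hi him le_rfl)
  have hS : 0 ≤ ∑ k ∈ range (K + 1), p k :=
    sum_nonneg fun k hk => hpos k (Nat.lt_succ_iff.mp (mem_range.mp hk))
  have hpm : p m ≤ 0 := (hanti _ m (by omega) (by omega) le_rfl).trans hneg
  have hM : (M : ℝ) ≤ m := by exact_mod_cast hMm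
  have hrec := invCoeff.succ_mul c (n := m) (by omega)
  have hfactor : 0 ≤ (c - 1) * m - 2 * ∑ k ∈ range (K + 1), p k - 1 := by
    have : 0 ≤ c - 1 := by
      by_contra h
      nlinarith [show (0 : ℝ) < M by exact_mod_cast (show 0 < M by omega)]
    nlinarith
  have hm1 : (0 : ℝ) < m + 1 := by positivity
  refine le_of_mul_le_mul_left ?_ hm1
  nlinarith [mul_nonpos_of_nonneg_of_nonpos hfactor hpm]

section nineFifths

local notation "p" => invCoeff (9 / 5)

theorem one_lt_abs_invCoeff_nine_fifths {n : ℕ} (hn : 10 ≤ n) : 1 < |p n| := by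
  have h2 : p 2 = 9 / 10 := by rw [invCoeff.eq_div _ le_rfl]; norm_num [sum_range_succ]
  have h3 : p 3 = 56 / 75 := by
    rw [invCoeff.eq_div _ (by norm_num)]; norm_num [sum_range_succ, *]
  have h4 : p 4 = 279 / 500 := by
    rw [invCoeff.eq_div _ (by norm_num)]; norm_num [sum_range_succ, *]
  have h5 : p 5 = 12857 / 37500 := by
    rw [invCoeff.eq_div _ (by norm_num)]; norm_num [sum_range_succ, *]
  have h6 : p 6 = 2607 / 25000 := by
    rw [invCoeff.eq_div _ (by norm_num)]; norm_num [sum_range_succ, *]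
  have h7 : p 7 = -22528 / 140625 := by
    rw [invCoeff.eq_div _ (by norm_num)]; norm_num [sum_range_succ, *]
  have h8 : p 8 = -574607 / 1250000 := by
    rw [invCoeff.eq_div _ (by norm_num)]; norm_num [sum_range_succ, *]
  have h9 : p 9 = -411195191 / 506250000 := by
    rw [invCoeff.eq_div _ (by norm_num)]; norm_num [sum_range_succ, *]
  have h10 : p 10 = -390277051 / 312500000 := by
    rw [invCoeff.eq_div _ (by norm_num)]; norm_num [sum_range_succ, *]
  have h11 : p 11 = -287969144 / 158203125 := by
    rw [invCoeff.eq_div _ (by norm_num)]; norm_num [sum_range_succ, *]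
  have h12 : p 12 = -14665967429 / 5625000000 := by
    rw [invCoeff.eq_div _ (by norm_num)]; norm_num [sum_range_succ, *]
  have h13 : p 13 = -2839121733119 / 759375000000 := by
    rw [invCoeff.eq_div _ (by norm_num)]; norm_num [sum_range_succ, *]
  have hanti := invCoeff_succ_le (c := 9 / 5) (K := 6) (M := 13) (by norm_num)
    (fun k hk => by interval_cases k <;> norm_num [*]) (by norm_num [*])
    (fun m hm hm' => by interval_cases m <;> norm_num [*]) (by norm_num [sum_range_succ, *])
  have hle : p n ≤ p 10 := by
    induction n, hn using Nat.le_induction with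
    | base => exact le_rfl
    | succ n hn ih => exact (hanti n (by omega)).trans ih
  rw [abs_of_neg (by linarith)]
  linarith

end nineFifths

theorem convex_inverse_coeff_large (n : ℕ) (hn : 10 ≤ n) :
    ∃ f g : ℂ → ℂ, ∃ A : ℕ → ℂ, ∃ r : ℝ, IsConvex f ∧
      IsInverseWithCoeffs f g A r ∧ 1 < ‖A n‖ := by
  have hα : (9 / 10 : ℝ) ≠ 0 := by norm_num
  have hα₁ : |(9 / 10 : ℝ)| ≤ 1 := by norm_num [abs_of_pos]
  refine ⟨sectorMap (9 / 10), sectorMapInv (9 / 10), fun k => invCoeff (2 * (9 / 10)) k, 1 / 4,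
    isConvex_sectorMap hα hα₁, isInverseWithCoeffs_sectorMapInv hα hα₁, ?_⟩
  rw [norm_real, Real.norm_eq_abs]
  norm_num
  exact one_lt_abs_invCoeff_nine_fifths hn
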